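/- Let H ∈ ℂ^{n×n}, let Π be a real symmetric 2×2 matrix with entries π₁₁, π₁₂, π₂₂, and let ε > 0. If every point z in the frequency-wise SRG of H satisfies π₁₁·|z|² + 2·π₁₂·(Re z) + π₂₂ ≤ −ε, then the Hermitian matrix π₁₁·H*H + π₁₂·(H + H*) + π₂₂·Iₙ + ε·Iₙ is negative semidefinite, i.e., [H; Iₙ]* (Π ⊗ Iₙ) [H; Iₙ] ⪯ −ε·Iₙ for the stacked 2n×n matrix [H; Iₙ]. -/

import Mathlib

open Matrix
open scoped ComplexOrder Classical

/-- SRG point `z₊(u, y) = (‖y‖/‖u‖)·exp(+i·arccos(Re⟪u,y⟫/(‖u‖‖y‖)))` for complex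
vectors (and `0` for `y = 0`). -/
noncomputable def srgPlusC {n : ℕ} (u y : EuclideanSpace ℂ (Fin n)) : ℂ :=
  if y = 0 then 0 else
    ((‖y‖ / ‖u‖ : ℝ) : ℂ) *
      Complex.exp (Complex.I *
        (Real.arccos ((inner ℂ u y : ℂ).re / (‖u‖ * ‖y‖)) : ℝ))

/-- SRG point `z₋(u, y) = (‖y‖/‖u‖)·exp(−i·arccos(Re⟪u,y⟫/(‖u‖‖y‖)))` for complex
vectors (and `0` for `y = 0`). -/
noncomputable def srgMinusC {n : ℕ} (u y : EuclideanSpace ℂ (Fin n)) : ℂ :=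
  if y = 0 then 0 else
    ((‖y‖ / ‖u‖ : ℝ) : ℂ) *
      Complex.exp (-Complex.I *
        (Real.arccos ((inner ℂ u y : ℂ).re / (‖u‖ * ‖y‖)) : ℝ))

/-- Matrix-vector multiplication, viewed on `EuclideanSpace ℂ (Fin n)`. -/
noncomputable def mulVecE {n : ℕ} (H : Matrix (Fin n) (Fin n) ℂ)
    (u : EuclideanSpace ℂ (Fin n)) : EuclideanSpace ℂ (Fin n) :=
  (WithLp.equiv 2 _).symm (H *ᵥ (WithLp.equiv 2 _) u)

/-- The frequency-wise SRG of a matrix `H ∈ ℂ^{n×n}`: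
`SRG(H) = ⋃ {z_±(u, Hu)}` over all nonzero `u ∈ ℂⁿ`. -/
noncomputable def fwSRG {n : ℕ} (H : Matrix (Fin n) (Fin n) ℂ) : Set ℂ :=
  {z : ℂ | ∃ u : EuclideanSpace ℂ (Fin n), u ≠ 0 ∧
    (z = srgPlusC u (mulVecE H u) ∨ z = srgMinusC u (mulVecE H u))}

/-!
For `u ≠ 0` and `y = Hu`, the SRG point `z₊(u, y)` has `|z| = ‖y‖/‖u‖` and, since Cauchy–Schwarz
puts the arccos argument in `[-1, 1]`, `Re z = Re⟪u, y⟫/‖u‖²`. Multiplying the separation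
inequality at `z₊(u, y)` by `‖u‖²` gives `π₁₁‖Hu‖² + 2π₁₂ Re⟪u, Hu⟫ + (π₂₂ + ε)‖u‖² ≤ 0`, and the
left-hand side is the quadratic form `u* M u` of `M = π₁₁ H*H + π₁₂ (H + H*) + (π₂₂ + ε) Iₙ`.
-/

section SRGPoint

variable {n : ℕ}

theorem norm_srgPlusC (u y : EuclideanSpace ℂ (Fin n)) : ‖srgPlusC u y‖ = ‖y‖ / ‖u‖ := by
  unfold srgPlusC
  split_ifs with hy
  · simp [hy]
  · rw [norm_mul, mul_comm Complex.I, Complex.norm_exp_ofReal_mul_I, Complex.norm_real,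
      Real.norm_of_nonneg (by positivity), mul_one]

theorem re_srgPlusC (u y : EuclideanSpace ℂ (Fin n)) :
    (srgPlusC u y).re = (inner ℂ u y).re / ‖u‖ ^ 2 := by
  unfold srgPlusC
  split_ifs with hy
  · simp [hy]
  obtain rfl | hu := eq_or_ne u 0
  · simp
  have hcs : |(inner ℂ u y).re| ≤ ‖u‖ * ‖y‖ :=
    (Complex.abs_re_le_norm _).trans (norm_inner_le_norm u y)
  have hpos : 0 < ‖u‖ * ‖y‖ := by positivity
  have hcos := abs_le.1 (by rwa [abs_div, abs_of_pos hpos, div_le_one hpos] :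
    |(inner ℂ u y).re / (‖u‖ * ‖y‖)| ≤ 1)
  rw [mul_comm Complex.I, Complex.re_ofReal_mul, Complex.exp_ofReal_mul_I_re,
    Real.cos_arccos hcos.1 hcos.2]
  field_simp

theorem quadratic_le_zero_of_srgPlusC {u y : EuclideanSpace ℂ (Fin n)} (hu : u ≠ 0) {a b c : ℝ}
    (h : a * ‖srgPlusC u y‖ ^ 2 + 2 * b * (srgPlusC u y).re + c ≤ 0) :
    a * ‖y‖ ^ 2 + 2 * b * (inner ℂ u y).re + c * ‖u‖ ^ 2 ≤ 0 := by
  have hu2 : 0 < ‖u‖ ^ 2 := by positivity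
  rw [norm_srgPlusC, re_srgPlusC, div_pow] at h
  have h' := mul_nonpos_of_nonpos_of_nonneg h hu2.le
  field_simp at h'
  linarith

end SRGPoint

section PiQuadForm

/-- `[H; I]ᴴ (Π ⊗ I) [H; I]` for `Π = !![a, b; b, c]`. -/
noncomputable def piQuadForm {ι : Type*} [Fintype ι] [DecidableEq ι] (H : Matrix ι ι ℂ) (a b c : ℝ) :
    Matrix ι ι ℂ :=
  a • (Hᴴ * H) + b • (H + Hᴴ) + c • 1

theorem isHermitian_piQuadForm {ι : Type*} [Fintype ι] [DecidableEq ι] (H : Matrix ι ι ℂ)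
    (a b c : ℝ) : (piQuadForm H a b c).IsHermitian :=
  (((isHermitian_conjTranspose_mul_self H).smul (.all a)).add
    ((isHermitian_add_transpose_self H).smul (.all b))).add (isHermitian_one.smul (.all c))

variable {n : ℕ}

theorem star_dotProduct_mulVec_eq_inner (H : Matrix (Fin n) (Fin n) ℂ)
    (u v : EuclideanSpace ℂ (Fin n)) :
    star v.ofLp ⬝ᵥ (H *ᵥ u.ofLp) = inner ℂ v (mulVecE H u) :=
  dotProduct_comm _ _

theorem star_dotProduct_piQuadForm_mulVec (H : Matrix (Fin n) (Fin n) ℂ) (a b c : ℝ)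
    (u : EuclideanSpace ℂ (Fin n)) :
    star u.ofLp ⬝ᵥ (piQuadForm H a b c *ᵥ u.ofLp) =
      ((a * ‖mulVecE H u‖ ^ 2 + 2 * b * (inner ℂ u (mulVecE H u)).re + c * ‖u‖ ^ 2 : ℝ) : ℂ) := by
  have hHH : star u.ofLp ⬝ᵥ ((Hᴴ * H) *ᵥ u.ofLp) = inner ℂ (mulVecE H u) (mulVecE H u) := by
    rw [← mulVec_mulVec, dotProduct_mulVec, ← star_mulVec]
    exact dotProduct_comm _ _
  have hHt : star u.ofLp ⬝ᵥ (Hᴴ *ᵥ u.ofLp) = starRingEnd ℂ (inner ℂ u (mulVecE H u)) := by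
    rw [inner_conj_symm, dotProduct_mulVec, ← star_mulVec]
    exact dotProduct_comm _ _
  have hI : star u.ofLp ⬝ᵥ u.ofLp = inner ℂ u u := dotProduct_comm _ _
  simp only [piQuadForm, add_mulVec, smul_mulVec, one_mulVec, dotProduct_add, dotProduct_smul,
    hHH, hHt, hI, star_dotProduct_mulVec_eq_inner, inner_self_eq_norm_sq_to_K]
  rw [Complex.add_conj]
  simp only [Complex.real_smul, RCLike.ofReal_eq_complex_ofReal]
  push_cast
  ring

end PiQuadForm

theorem fw_srg_strict_separation_general (n : ℕ) (H : Matrix (Fin n) (Fin n) ℂ)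
    (p11 p12 p22 ε : ℝ)
    (hsep : ∀ z ∈ fwSRG H,
      p11 * ‖z‖ ^ 2 + 2 * p12 * z.re + p22 ≤ -ε) :
    (-(p11 • (Hᴴ * H) + p12 • (H + Hᴴ) + p22 • (1 : Matrix (Fin n) (Fin n) ℂ) +
        ε • (1 : Matrix (Fin n) (Fin n) ℂ))).PosSemidef := by
  rw [add_assoc _ (p22 • _), ← add_smul]
  change (-piQuadForm H p11 p12 (p22 + ε)).PosSemidef
  refine .of_dotProduct_mulVec_nonneg (isHermitian_piQuadForm H _ _ _).neg fun x => ?_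
  obtain rfl | hx := eq_or_ne x 0
  · simp
  set u : EuclideanSpace ℂ (Fin n) := WithLp.toLp 2 x
  have hu : u ≠ 0 := by simpa [u] using hx
  have hz := hsep _ ⟨u, hu, Or.inl rfl⟩
  rw [neg_mulVec, dotProduct_neg, star_dotProduct_piQuadForm_mulVec H _ _ _ u,
    ← Complex.ofReal_neg, Complex.zero_le_real, neg_nonneg]
  exact quadratic_le_zero_of_srgPlusC hu (by linarith)

/-- If every point `z` of the frequency-wise SRG of `H` satisfies
`π₁₁|z|² + 2π₁₂·Re z + π₂₂ ≤ −ε` (with `ε > 0`), then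
`π₁₁·H*H + π₁₂·(H + H*) + π₂₂·Iₙ + ε·Iₙ` is negative semidefinite, i.e.
`[H; Iₙ]*(Π ⊗ Iₙ)[H; Iₙ] ⪯ −ε·Iₙ`. -/
theorem fw_srg_strict_separation (n : ℕ) (H : Matrix (Fin n) (Fin n) ℂ)
    (p11 p12 p22 ε : ℝ) (hε : 0 < ε)
    (hsep : ∀ z ∈ fwSRG H,
      p11 * ‖z‖ ^ 2 + 2 * p12 * z.re + p22 ≤ -ε) :
    (-(p11 • (Hᴴ * H) + p12 • (H + Hᴴ) + p22 • (1 : Matrix (Fin n) (Fin n) ℂ) +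
        ε • (1 : Matrix (Fin n) (Fin n) ℂ))).PosSemidef :=
  fw_srg_strict_separation_general n H p11 p12 p22 ε hsep
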